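/- Over a field of characteristic zero, the Hessian matrix of a web (4-dimensional linear system) of quadrics in P³ is catalecticant with respect to a suitable choice of bases if and only if every quadric in the web is annihilated, under the apolarity pairing, by all the quadrics defining some twisted cubic curve in the dual projective 3-space (i.e., the web is orthic to a twisted cubic). -/
import Mathlib


open MvPolynomial

noncomputable section

variable {k : Type} [Field k]

/-- The partial derivative `∂ᵢ` as a linear endomorphism. -/
def pd (i : Fin 4) : Module.End k (MvPolynomial (Fin 4) k) :=
  ((pderiv i :
    Derivation k (MvPolynomial (Fin 4) k) (MvPolynomial (Fin 4) k)).toLinearMap)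

/-- The differential operator `∂^m` (a product of partial derivatives) acting on
polynomials in four variables. -/
def diffOp (m : Fin 4 →₀ ℕ) : Module.End k (MvPolynomial (Fin 4) k) :=
  pd 0 ^ m 0 * pd 1 ^ m 1 * pd 2 ^ m 2 * pd 3 ^ m 3

/-- The apolarity action: a polynomial `D` in the dual variables `∂₀,…,∂₃` acts on a
polynomial `f` in `x₀,…,x₃` as the corresponding constant-coefficient differential
operator: `∂^α(x^β) = α!·C(β,α)·x^{β−α}`. -/
def apol (D f : MvPolynomial (Fin 4) k) : MvPolynomial (Fin 4) k :=
  ∑ m ∈ D.support, D.coeff m • diffOp m f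

/-- The linear substitution of variables associated to `g ∈ GL₄`. -/
def gSub (g : GL (Fin 4) k) :
    MvPolynomial (Fin 4) k →ₐ[k] MvPolynomial (Fin 4) k :=
  aeval fun i => ∑ j, C (g.val i j) * X j

/-- The three quadrics (2×2 minors of the standard 2×3 catalecticant matrix of
variables) defining the standard twisted cubic curve. -/
def tc : Fin 3 → MvPolynomial (Fin 4) k :=
  ![X 0 * X 2 - X 1 * X 1, X 0 * X 3 - X 1 * X 2, X 1 * X 3 - X 2 * X 2]

/-- The quadric of the web with coefficient tensor `B` corresponding to the
parameter `w ∈ W ≅ k⁴`:  `q_w = ∑ (∑ B i j t · w t) xᵢxⱼ`. -/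
def webQuadric (B : Fin 4 → Fin 4 → Fin 4 → k) (w : Fin 4 → k) :
    MvPolynomial (Fin 4) k :=
  ∑ i, ∑ j, C (∑ t, B i j t * w t) * X i * X j

/-- The web of quadrics with coefficient tensor `B` is orthic to the twisted cubic
curve `g · (standard twisted cubic)` in the dual `ℙ³`: every quadric of the web
annihilates, under the apolarity action, all the defining quadrics of that twisted
cubic. -/
def Orthic (B : Fin 4 → Fin 4 → Fin 4 → k) (g : GL (Fin 4) k) : Prop :=
  ∀ (w : Fin 4 → k) (s : Fin 3), apol (gSub g (tc s)) (webQuadric B w) = 0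

/-- The net of quadrics defining the twisted cubic `g · (standard twisted cubic)`;
two twisted cubics coincide iff their nets of quadrics coincide. -/
def cubicNet (g : GL (Fin 4) k) : Submodule k (MvPolynomial (Fin 4) k) :=
  Submodule.span k (Set.range fun s : Fin 3 => gSub g (tc s))

/-! ### Auxiliary lemmas -/

lemma apol_add (D E f : MvPolynomial (Fin 4) k) :
    apol (D + E) f = apol D f + apol E f := by
  classical
  unfold apol
  have h : ∀ (G : MvPolynomial (Fin 4) k), G.support ⊆ D.support ∪ E.support →
      ∑ m ∈ G.support, G.coeff m • diffOp m f
        = ∑ m ∈ D.support ∪ E.support, G.coeff m • diffOp m f := by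
    intro G hG
    refine Finset.sum_subset hG ?_
    intro x _ hx
    rw [MvPolynomial.notMem_support_iff.mp hx, zero_smul]
  rw [h (D + E) MvPolynomial.support_add, h D Finset.subset_union_left,
    h E Finset.subset_union_right, ← Finset.sum_add_distrib]
  refine Finset.sum_congr rfl fun m _ => ?_
  rw [coeff_add, add_smul]

lemma apol_smul (c : k) (D f : MvPolynomial (Fin 4) k) :
    apol (c • D) f = c • apol D f := by
  classical
  unfold apol
  have h1 : (c • D).support ⊆ D.support := MvPolynomial.support_smul
  rw [Finset.sum_subset h1 (fun x _ hx => by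
    rw [MvPolynomial.notMem_support_iff.mp hx, zero_smul]), Finset.smul_sum]
  refine Finset.sum_congr rfl fun m _ => ?_
  rw [MvPolynomial.coeff_smul, smul_eq_mul, mul_smul]

lemma apol_monomial (m : Fin 4 →₀ ℕ) (c : k) (f : MvPolynomial (Fin 4) k) :
    apol (monomial m c) f = c • diffOp m f := by
  classical
  unfold apol
  rcases eq_or_ne c 0 with h | h
  · simp [h]
  · rw [support_monomial, if_neg h, Finset.sum_singleton, coeff_monomial, if_pos rfl]

/-- `apol` as a linear map in its first argument. -/
def apolL (f : MvPolynomial (Fin 4) k) :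
    MvPolynomial (Fin 4) k →ₗ[k] MvPolynomial (Fin 4) k where
  toFun D := apol D f
  map_add' D E := apol_add D E f
  map_smul' c D := apol_smul c D f

lemma apolL_apply (f D : MvPolynomial (Fin 4) k) : apolL f D = apol D f := rfl

lemma apol_sub (D E f : MvPolynomial (Fin 4) k) :
    apol (D - E) f = apol D f - apol E f := by
  rw [← apolL_apply, ← apolL_apply, ← apolL_apply, map_sub]

lemma pd_apply (i : Fin 4) (f : MvPolynomial (Fin 4) k) : pd i f = pderiv i f := rfl

lemma pderiv_CXX (a : k) (i i' l : Fin 4) :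
    pderiv l (C a * X i * X i') =
      (if i = l then C a * X i' else 0) + (if i' = l then C a * X i else 0) := by
  classical
  rw [pderiv_mul, pderiv_mul, pderiv_C, pderiv_X, pderiv_X]
  simp only [Pi.single_apply, eq_comm (a := l)]
  split_ifs <;> ring

lemma pderiv_CX (a : k) (i j : Fin 4) :
    pderiv j (C a * X i) = if i = j then C a else 0 := by
  classical
  rw [pderiv_mul, pderiv_C, pderiv_X]
  simp only [Pi.single_apply, eq_comm (a := j)]
  split_ifs <;> ring

lemma pd_pd_webAux (c : Fin 4 → Fin 4 → k) (j l : Fin 4) :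
    pd j (pd l (∑ i, ∑ i', C (c i i') * X i * X i')) = C (c j l + c l j) := by
  classical
  simp only [pd_apply, map_sum, pderiv_CXX]
  simp only [map_add, apply_ite (pderiv j), map_zero, pderiv_CX]
  simp only [Finset.sum_add_distrib]
  simp [Finset.sum_ite_eq', add_comm]

lemma pd_pd_web (B : Fin 4 → Fin 4 → Fin 4 → k) (w : Fin 4 → k) (j l : Fin 4) :
    pd j (pd l (webQuadric B w)) =
      C ((∑ t, B j l t * w t) + (∑ t, B l j t * w t)) :=
  pd_pd_webAux (fun i i' => ∑ t, B i i' t * w t) j l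

lemma diffOp_pair_web (B : Fin 4 → Fin 4 → Fin 4 → k) (w : Fin 4 → k) (a b : Fin 4) :
    diffOp (Finsupp.single a 1 + Finsupp.single b 1) (webQuadric B w)
      = C ((∑ t, B a b t * w t) + (∑ t, B b a t * w t)) := by
  fin_cases a <;> fin_cases b <;>
    (rw [diffOp]
     simp (config := { decide := true }) only [Finsupp.add_apply, Finsupp.single_apply]
     simp only [if_true, if_false, zero_add, add_zero, Nat.reduceAdd, pow_one, pow_zero,
       pow_two, one_mul, mul_one, Module.End.mul_apply, Module.End.one_apply]
     rw [pd_pd_web]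
     first | rfl | exact congrArg C (add_comm _ _))

lemma apol_XX (B : Fin 4 → Fin 4 → Fin 4 → k) (w : Fin 4 → k) (a b : Fin 4) :
    apol (X a * X b) (webQuadric B w)
      = C ((∑ t, B a b t * w t) + (∑ t, B b a t * w t)) := by
  rw [show (X a * X b : MvPolynomial (Fin 4) k)
      = monomial (Finsupp.single a 1 + Finsupp.single b 1) 1 from by
    simp [X, monomial_mul]]
  rw [apol_monomial, one_smul, diffOp_pair_web]

lemma apol_linform (B : Fin 4 → Fin 4 → Fin 4 → k) (w : Fin 4 → k) (p q : Fin 4 → k) :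
    apol ((∑ j, C (p j) * X j) * (∑ l, C (q l) * X l)) (webQuadric B w)
      = C (∑ j, ∑ l, p j * q l *
          ((∑ t, B j l t * w t) + (∑ t, B l j t * w t))) := by
  have h : ∀ j l : Fin 4,
      (C (p j) * X j) * (C (q l) * X l)
        = (p j * q l) • ((X j * X l : MvPolynomial (Fin 4) k)) := by
    intro j l
    rw [smul_eq_C_mul, C_mul]
    ring
  rw [Fintype.sum_mul_sum]
  simp only [h]
  have expand : apol (∑ j : Fin 4, ∑ l : Fin 4,
        (p j * q l) • ((X j * X l : MvPolynomial (Fin 4) k))) (webQuadric B w)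
      = ∑ j : Fin 4, ∑ l : Fin 4, (p j * q l) • apol (X j * X l) (webQuadric B w) := by
    rw [← apolL_apply, map_sum]
    refine Finset.sum_congr rfl fun j _ => ?_
    rw [map_sum]
    refine Finset.sum_congr rfl fun l _ => ?_
    rw [map_smul]
    rfl
  rw [expand]
  simp only [apol_XX, smul_eq_C_mul, ← C_mul]
  rw [eq_comm]
  simp only [map_sum]

/-- The symmetric matrix of the web quadric in coordinates moved by `g`. -/
def Mm (B : Fin 4 → Fin 4 → Fin 4 → k) (g : Matrix (Fin 4) (Fin 4) k)
    (w : Fin 4 → k) (a b : Fin 4) : k :=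
  ∑ j, ∑ l, g a j * g b l * ∑ t, B j l t * w t

lemma apol_gSub_pair (B : Fin 4 → Fin 4 → Fin 4 → k) (w : Fin 4 → k)
    (g : GL (Fin 4) k) (hBsym : ∀ i j t, B i j t = B j i t) (a b : Fin 4) :
    apol (gSub g (X a * X b)) (webQuadric B w) = C (2 * Mm B g.val w a b) := by
  rw [map_mul, show gSub g (X a) = ∑ j, C (g.val a j) * X j from by simp [gSub],
    show gSub g (X b) = ∑ l, C (g.val b l) * X l from by simp [gSub], apol_linform]
  congr 1
  rw [Mm, Finset.mul_sum]
  refine Finset.sum_congr rfl fun j _ => ?_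
  rw [Finset.mul_sum]
  refine Finset.sum_congr rfl fun l _ => ?_
  rw [show (∑ t, B l j t * w t) = ∑ t, B j l t * w t from
    Finset.sum_congr rfl fun t _ => by rw [hBsym]]
  ring

lemma orthic_iff [CharZero k] (B : Fin 4 → Fin 4 → Fin 4 → k)
    (hBsym : ∀ i j t, B i j t = B j i t) (g : GL (Fin 4) k) :
    Orthic B g ↔ ∀ w : Fin 4 → k,
      Mm B g.val w 0 2 = Mm B g.val w 1 1 ∧ Mm B g.val w 0 3 = Mm B g.val w 1 2 ∧
      Mm B g.val w 1 3 = Mm B g.val w 2 2 := by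
  have key : ∀ (w : Fin 4 → k) (a b a' b' : Fin 4),
      apol (gSub g (X a * X b - X a' * X b')) (webQuadric B w) = 0 ↔
        Mm B g.val w a b = Mm B g.val w a' b' := by
    intro w a b a' b'
    rw [map_sub, apol_sub, apol_gSub_pair B w g hBsym, apol_gSub_pair B w g hBsym,
      ← C_sub, C_eq_zero, sub_eq_zero]
    constructor
    · intro h
      exact mul_left_cancel₀ two_ne_zero h
    · intro h
      rw [h]
  constructor
  · intro h w
    exact ⟨(key w 0 2 1 1).mp (h w 0), (key w 0 3 1 2).mp (h w 1),
      (key w 1 3 2 2).mp (h w 2)⟩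
  · intro h w s
    fin_cases s
    · exact (key w 0 2 1 1).mpr (h w).1
    · exact (key w 0 3 1 2).mpr (h w).2.1
    · exact (key w 1 3 2 2).mpr (h w).2.2

lemma Mm_symm (B : Fin 4 → Fin 4 → Fin 4 → k) (hBsym : ∀ i j t, B i j t = B j i t)
    (g : Matrix (Fin 4) (Fin 4) k) (w : Fin 4 → k) (a b : Fin 4) :
    Mm B g w a b = Mm B g w b a := by
  rw [Mm, Mm, Finset.sum_comm]
  refine Finset.sum_congr rfl fun l _ => Finset.sum_congr rfl fun j _ => ?_
  rw [show (∑ t, B l j t * w t) = ∑ t, B j l t * w t from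
    Finset.sum_congr rfl fun t _ => by rw [hBsym]]
  ring

/-- The catalecticant sequence associated to the matrix `Mm`. -/
def mseq (B : Fin 4 → Fin 4 → Fin 4 → k) (g : Matrix (Fin 4) (Fin 4) k)
    (w : Fin 4 → k) : ℕ → k := fun n =>
  match n with
  | 0 => Mm B g w 0 0
  | 1 => Mm B g w 0 1
  | 2 => Mm B g w 1 1
  | 3 => Mm B g w 1 2
  | 4 => Mm B g w 2 2
  | 5 => Mm B g w 2 3
  | 6 => Mm B g w 3 3
  | _ => 0

lemma Mm_cat (B : Fin 4 → Fin 4 → Fin 4 → k) (hBsym : ∀ i j t, B i j t = B j i t)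
    (g : Matrix (Fin 4) (Fin 4) k) (w : Fin 4 → k)
    (h1 : Mm B g w 0 2 = Mm B g w 1 1) (h2 : Mm B g w 0 3 = Mm B g w 1 2)
    (h3 : Mm B g w 1 3 = Mm B g w 2 2) (i j : Fin 4) :
    Mm B g w i j = mseq B g w ((i : ℕ) + (j : ℕ)) := by
  fin_cases i <;> fin_cases j <;>
    first
      | rfl
      | exact h1
      | exact h2
      | exact h3
      | exact Mm_symm B hBsym g w _ _
      | exact (Mm_symm B hBsym g w _ _).trans h1
      | exact (Mm_symm B hBsym g w _ _).trans h2
      | exact (Mm_symm B hBsym g w _ _).trans h3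

/-- The transpose of an invertible matrix, as an element of `GL`. -/
def GLt (P : GL (Fin 4) k) : GL (Fin 4) k :=
  ⟨P.val.transpose, P.inv.transpose,
    by rw [← Matrix.transpose_mul, P.inv_val, Matrix.transpose_one],
    by rw [← Matrix.transpose_mul, P.val_inv, Matrix.transpose_one]⟩

/-- **Proposition 4.1 (Reye, Conner).** Over a field of characteristic zero, the
Hessian matrix of a web (a `4`-dimensional linear system, given by an injective
linear map `w ↦ q_w` with symmetric coefficient tensor `B`) of quadrics in `ℙ³` is
catalecticant with respect to a suitable choice of bases — i.e. after a linear
change of coordinates `P ∈ GL₄` on `ℙ³` and a change of basis `Qw ∈ GL₄` of the web,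
the `(i,j)` entry (a linear form on `W`) depends only on `i + j` — if and only if
the web is orthic to some twisted cubic curve in the dual `ℙ³`: every quadric of the
web annihilates, under the apolarity pairing, the defining quadrics of that twisted
cubic. -/
theorem web_hessian_catalecticant_iff_orthic
    (k : Type) [Field k] [CharZero k]
    (B : Fin 4 → Fin 4 → Fin 4 → k)
    (hBsym : ∀ i j t, B i j t = B j i t)
    (hinj : Function.Injective fun w : Fin 4 → k => webQuadric B w) :
    (∃ P Qw : GL (Fin 4) k,
      ∀ i j i' j' : Fin 4, (i : ℕ) + (j : ℕ) = (i' : ℕ) + (j' : ℕ) →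
        (fun w : Fin 4 → k =>
          ∑ i'', ∑ j'', P.val i'' i * P.val j'' j *
            ∑ t, B i'' j'' t * Qw.val.mulVec w t) =
        (fun w : Fin 4 → k =>
          ∑ i'', ∑ j'', P.val i'' i' * P.val j'' j' *
            ∑ t, B i'' j'' t * Qw.val.mulVec w t)) ↔
    (∃ g : GL (Fin 4) k, Orthic B g) := by
  constructor
  · rintro ⟨P, Qw, hPQ⟩
    refine ⟨GLt P, (orthic_iff B hBsym (GLt P)).mpr fun w => ?_⟩
    set w0 : Fin 4 → k := Qw.inv.mulVec w with hw0
    have hw : Qw.val.mulVec w0 = w := by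
      rw [hw0, Matrix.mulVec_mulVec, Qw.val_inv, Matrix.one_mulVec]
    have hN : ∀ a b : Fin 4, Mm B (GLt P).val w a b
        = ∑ i'', ∑ j'', P.val i'' a * P.val j'' b *
            ∑ t, B i'' j'' t * Qw.val.mulVec w0 t := by
      intro a b
      simp [Mm, GLt, Matrix.transpose_apply, hw]
    refine ⟨?_, ?_, ?_⟩ <;> rw [hN, hN]
    · exact congrFun (hPQ 0 2 1 1 (by decide)) w0
    · exact congrFun (hPQ 0 3 1 2 (by decide)) w0
    · exact congrFun (hPQ 1 3 2 2 (by decide)) w0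
  · rintro ⟨g, hg⟩
    rw [orthic_iff B hBsym] at hg
    refine ⟨GLt g, 1, fun i j i' j' hsum => ?_⟩
    funext w
    have hN : ∀ a b : Fin 4,
        (∑ i'', ∑ j'', (GLt g).val i'' a * (GLt g).val j'' b *
            ∑ t, B i'' j'' t * (1 : GL (Fin 4) k).val.mulVec w t)
          = Mm B g.val w a b := by
      intro a b
      simp [Mm, GLt, Matrix.transpose_apply, Units.val_one, Matrix.one_mulVec]
    rw [hN, hN, Mm_cat B hBsym g.val w (hg w).1 (hg w).2.1 (hg w).2.2,
      Mm_cat B hBsym g.val w (hg w).1 (hg w).2.1 (hg w).2.2, hsum]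

end
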